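/- In the abstract L⁰/L¹ equivalence setting, every minimizer of J₁ over A is also a minimizer of J₀ over A (the inclusion direction): if u₁* minimizes J₁ over A and u₁*(t) ∈ {-1,0,1} a.e., then J₀(u₁*) ≤ J₀(u) for all u ∈ A. -/

import Mathlib

/-!
On a bang-off-bang control |u₁| coincides a.e. with the indicator of its support, so
J₁(u₁) = J₀(u₁); for any admissible u, |u| ≤ 1 gives J₁(u) ≤ J₀(u). Hence
J₀(u₁) = J₁(u₁) ≤ J₁(u) ≤ J₀(u).
-/

open MeasureTheory Set Function
open scoped ENNReal

section

variable {α : Type*} [MeasurableSpace α] {μ : Measure α} {f : α → ℝ}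

/-- No measurability of `f` is needed: the support is enlarged to a measurable hull of the
same measure. -/
theorem integral_abs_le_measureReal_support (hf : ∀ᵐ x ∂μ, |f x| ≤ 1)
    (hsupp : μ (support f) ≠ ∞) : ∫ x, |f x| ∂μ ≤ μ.real (support f) := by
  set s := toMeasurable μ (support f)
  have hs : MeasurableSet s := measurableSet_toMeasurable μ _
  have hint : Integrable (s.indicator 1) μ :=
    (integrable_indicator_iff hs).2 <|
      integrableOn_const (C := (1 : ℝ)) (by rwa [measure_toMeasurable])
  have hle : ∀ᵐ x ∂μ, |f x| ≤ s.indicator 1 x := by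
    filter_upwards [hf] with x hx
    by_cases h0 : f x = 0
    · rw [h0, abs_zero]
      exact indicator_nonneg (fun _ _ => zero_le_one) x
    · rwa [indicator_of_mem (subset_toMeasurable μ _ h0), Pi.one_apply]
  calc ∫ x, |f x| ∂μ ≤ ∫ x, s.indicator 1 x ∂μ :=
        integral_mono_of_nonneg (ae_of_all _ fun x => abs_nonneg _) hint hle
    _ = μ.real s := integral_indicator_one hs
    _ = μ.real (support f) := by rw [measureReal_def, measure_toMeasurable, measureReal_def]

theorem integral_abs_eq_measureReal_support (hf : Measurable f)
    (hbang : ∀ᵐ x ∂μ, f x ∈ ({-1, 0, 1} : Set ℝ)) : ∫ x, |f x| ∂μ = μ.real (support f) := by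
  have habs : (fun x => |f x|) =ᵐ[μ] (support f).indicator 1 := by
    filter_upwards [hbang] with x hx
    obtain h | h | h : f x = -1 ∨ f x = 0 ∨ f x = 1 := hx <;> simp [h]
  rw [integral_congr_ae habs, integral_indicator_one (measurableSet_support hf)]

theorem measure_sep_ne_zero_eq_restrict_support {s : Set α} (hs : MeasurableSet s) :
    μ {x ∈ s | f x ≠ 0} = μ.restrict s (support f) := by
  rw [Measure.restrict_apply' hs, inter_comm]
  rfl

end

theorem l1_min_is_l0_min_general (T : ℝ) (A : Set (ℝ → ℝ))
    (hmeas : ∀ u ∈ A, Measurable u)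
    (hbd : ∀ u ∈ A, ∀ᵐ t ∂(volume.restrict (Icc (0:ℝ) T)), |u t| ≤ 1)
    (J0 J1 : (ℝ → ℝ) → ℝ)
    (hJ0 : ∀ u, J0 u = (volume {t ∈ Icc (0:ℝ) T | u t ≠ 0}).toReal)
    (hJ1 : ∀ u, J1 u = ∫ t in Icc (0:ℝ) T, |u t|)
    (u₁ : ℝ → ℝ) (hu₁ : u₁ ∈ A) (hmin : ∀ u ∈ A, J1 u₁ ≤ J1 u)
    (hbang : ∀ᵐ t ∂(volume.restrict (Icc (0:ℝ) T)), u₁ t ∈ ({-1, 0, 1} : Set ℝ)) :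
    ∀ u ∈ A, J0 u₁ ≤ J0 u := by
  intro u hu
  simp only [hJ0, measure_sep_ne_zero_eq_restrict_support measurableSet_Icc, ← measureReal_def]
  calc (volume.restrict (Icc 0 T)).real (support u₁) = J1 u₁ := by
        rw [hJ1, integral_abs_eq_measureReal_support (hmeas u₁ hu₁) hbang]
    _ ≤ J1 u := hmin u hu
    _ ≤ (volume.restrict (Icc 0 T)).real (support u) := by
        rw [hJ1]
        exact integral_abs_le_measureReal_support (hbd u hu) (measure_ne_top _ _)

/-- Inclusion direction: a bang-off-bang J₁ minimizer over A is also a J₀ minimizer over A. -/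
theorem l1_min_is_l0_min (T : ℝ) (hT : 0 < T) (A : Set (ℝ → ℝ)) (hAne : A.Nonempty)
    (hmeas : ∀ u ∈ A, Measurable u)
    (hbd : ∀ u ∈ A, ∀ᵐ t ∂(volume.restrict (Icc (0:ℝ) T)), |u t| ≤ 1)
    (J0 J1 : (ℝ → ℝ) → ℝ)
    (hJ0 : ∀ u, J0 u = (volume {t ∈ Icc (0:ℝ) T | u t ≠ 0}).toReal)
    (hJ1 : ∀ u, J1 u = ∫ t in Icc (0:ℝ) T, |u t|)
    (u₁ : ℝ → ℝ) (hu₁ : u₁ ∈ A) (hmin : ∀ u ∈ A, J1 u₁ ≤ J1 u)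
    (hbang : ∀ᵐ t ∂(volume.restrict (Icc (0:ℝ) T)), u₁ t ∈ ({-1, 0, 1} : Set ℝ)) :
    ∀ u ∈ A, J0 u₁ ≤ J0 u :=
  l1_min_is_l0_min_general T A hmeas hbd J0 J1 hJ0 hJ1 u₁ hu₁ hmin hbang
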